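/- arXiv:1605.02291 — 7 statements merged into one kernel-verified Lean document; each statement's English description precedes it below -/
import Mathlib

section
/- Let G and H be finite simple graphs of orders n ≥ 1 and m ≥ 1 respectively. Then the domination polynomial of the corona satisfies D(G ∘ H, x) = (x(1+x)^m + D(H, x))^n. -/
open Polynomial

variable {V W : Type*}

/-- `S` is a dominating set of `G`. -/
def Dominates (G : SimpleGraph V) (S : Finset V) : Prop :=
  ∀ v, v ∉ S → ∃ u ∈ S, G.Adj u v

open Classical in
/-- The domination polynomial of a finite simple graph. -/
noncomputable def domPoly [Fintype V] (G : SimpleGraph V) : Polynomial ℤ :=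
  ∑ S : Finset V, if Dominates G S then (X : Polynomial ℤ) ^ S.card else 0

/-- The corona `G ∘ H`. -/
def corona (G : SimpleGraph V) (H : SimpleGraph W) : SimpleGraph (V ⊕ V × W) where
  Adj x y :=
    match x, y with
    | Sum.inl a, Sum.inl b => G.Adj a b
    | Sum.inl a, Sum.inr (b, _) => a = b
    | Sum.inr (b, _), Sum.inl a => a = b
    | Sum.inr (a, w), Sum.inr (b, w') => a = b ∧ H.Adj w w'
  symm := by
    constructor
    rintro (a | ⟨a, w⟩) (b | ⟨b, w'⟩) h
    · exact G.adj_symm h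
    · exact h
    · exact h
    · exact ⟨h.1.symm, H.adj_symm h.2⟩
  loopless := by
    constructor
    rintro (a | ⟨a, w⟩) h
    · exact G.irrefl h
    · exact H.irrefl h.2

/-!
When `H` is nonempty, a set `S` of vertices of `G ∘ H` is dominating exactly when, for every
vertex `a` of `G`, either `a ∈ S` or `S` meets the copy `H_a` of `H` hanging at `a` in a
dominating set of `H_a`: a vertex of `G` outside `S` can always be dominated from its own copy,
while a vertex of `H_a` sees nothing outside `H_a` but `a`. So the choice of `S` splits into
independent choices at each `a`: either `a ∈ S` together with an arbitrary subset of `H_a`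
(weight `x (1 + x)^m`), or `a ∉ S` together with a dominating set of `H_a` (weight `D(H, x)`).
The generating function is therefore the `n`-th power of their sum.
-/

open Finset Classical

noncomputable def domWeight (G : SimpleGraph V) (S : Finset V) : ℤ[X] :=
  if Dominates G S then X ^ #S else 0

theorem domPoly_eq_sum_domWeight [Fintype V] (G : SimpleGraph V) :
    domPoly G = ∑ S, domWeight G S :=
  rfl

theorem Dominates.nonempty [Nonempty V] {G : SimpleGraph V} {S : Finset V}
    (hS : Dominates G S) : S.Nonempty := by
  obtain ⟨v⟩ := ‹Nonempty V›
  by_cases hv : v ∈ S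
  · exact ⟨v, hv⟩
  · obtain ⟨u, hu, -⟩ := hS v hv
    exact ⟨u, hu⟩

namespace Corona

variable [Fintype W]

noncomputable def fiber (S : Finset (V ⊕ V × W)) (a : V) : Finset W :=
  univ.filter fun w => Sum.inr (a, w) ∈ S

@[simp]
theorem mem_fiber {S : Finset (V ⊕ V × W)} {a : V} {w : W} :
    w ∈ fiber S a ↔ Sum.inr (a, w) ∈ S := by
  simp [fiber]

theorem dominates_iff [Nonempty W] (G : SimpleGraph V) (H : SimpleGraph W)
    (S : Finset (V ⊕ V × W)) :
    Dominates (corona G H) S ↔ ∀ a, Sum.inl a ∈ S ∨ Dominates H (fiber S a) := by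
  constructor
  · intro hS a
    refine or_iff_not_imp_left.mpr fun ha w hw => ?_
    obtain ⟨u | ⟨b, w'⟩, hu, hadj⟩ := hS (Sum.inr (a, w)) (mt mem_fiber.mpr hw)
    · obtain rfl : u = a := hadj
      exact absurd hu ha
    · obtain ⟨rfl, hww'⟩ := hadj
      exact ⟨w', mem_fiber.mpr hu, hww'⟩
  · rintro hS (a | ⟨a, w⟩) hv
    · obtain ⟨w, hw⟩ := ((hS a).resolve_left hv).nonempty
      exact ⟨Sum.inr (a, w), mem_fiber.mp hw, rfl⟩
    · rcases hS a with ha | hdom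
      · exact ⟨Sum.inl a, ha, rfl⟩
      · obtain ⟨w', hw', hww'⟩ := hdom w (mt mem_fiber.mp hv)
        exact ⟨Sum.inr (a, w'), mem_fiber.mp hw', rfl, hww'⟩

variable [Fintype V]

noncomputable def split : Finset (V ⊕ V × W) ≃ (V → Bool × Finset W) where
  toFun S a := (decide (Sum.inl a ∈ S), fiber S a)
  invFun g := univ.filter fun
    | Sum.inl a => (g a).1
    | Sum.inr (a, w) => w ∈ (g a).2
  left_inv S := by
    ext (a | ⟨a, w⟩) <;> simp
  right_inv g := by
    funext a
    ext <;> simp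

theorem card_eq_sum_split (S : Finset (V ⊕ V × W)) :
    #S = ∑ a, ((split S a).1.toNat + #(split S a).2) := by
  have hcard : #S = ∑ x, if x ∈ S then 1 else 0 := by
    rw [← card_filter, filter_mem_eq_inter, univ_inter]
  rw [hcard, Fintype.sum_sum_type, Fintype.sum_prod_type, ← sum_add_distrib]
  refine sum_congr rfl fun a _ => ?_
  rw [← card_filter]
  by_cases ha : Sum.inl a ∈ S <;> simp [split, fiber, ha]

noncomputable def weight (H : SimpleGraph W) (p : Bool × Finset W) : ℤ[X] :=
  if p.1 ∨ Dominates H p.2 then X ^ (p.1.toNat + #p.2) else 0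

theorem domWeight_eq_prod_weight [Nonempty W] (G : SimpleGraph V) (H : SimpleGraph W)
    (S : Finset (V ⊕ V × W)) :
    domWeight (corona G H) S = ∏ a, weight H (split S a) := by
  simp only [weight, Fintype.prod_ite_zero, prod_pow_eq_pow_sum, ← card_eq_sum_split]
  simp [domWeight, dominates_iff, split]

theorem sum_weight (H : SimpleGraph W) :
    ∑ p, weight H p = X * (1 + X) ^ Fintype.card W + domPoly H := by
  have hsubsets : ∑ T : Finset W, (X : ℤ[X]) ^ #T = (1 + X) ^ Fintype.card W := by
    simpa [add_comm] using Fintype.sum_pow_mul_eq_add_pow W (X : ℤ[X]) 1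
  rw [Fintype.sum_prod_type, Fintype.sum_bool, domPoly_eq_sum_domWeight, ← hsubsets, mul_sum]
  simp [weight, domWeight, pow_add]

end Corona

theorem domPoly_corona_general {V W : Type*} [Fintype V] [Fintype W]
    (G : SimpleGraph V) (H : SimpleGraph W)
    (hm : 1 ≤ Fintype.card W) :
    domPoly (corona G H) =
      (X * (1 + X) ^ Fintype.card W + domPoly H) ^ Fintype.card V := by
  have : Nonempty W := Fintype.card_pos_iff.mp hm
  calc domPoly (corona G H)
      = ∑ S, ∏ a, Corona.weight H (Corona.split S a) := by
        simp only [domPoly_eq_sum_domWeight, Corona.domWeight_eq_prod_weight]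
    _ = ∑ g : V → Bool × Finset W, ∏ a, Corona.weight H (g a) :=
        Corona.split.sum_comp fun g => ∏ a, Corona.weight H (g a)
    _ = ∏ _a : V, ∑ p, Corona.weight H p := (Fintype.prod_sum _).symm
    _ = (X * (1 + X) ^ Fintype.card W + domPoly H) ^ Fintype.card V := by
        rw [Corona.sum_weight, prod_const, card_univ]

/-- The domination polynomial of the corona of two graphs. -/
theorem domPoly_corona {V W : Type*} [Fintype V] [Fintype W]
    (G : SimpleGraph V) (H : SimpleGraph W)
    (hn : 1 ≤ Fintype.card V) (hm : 1 ≤ Fintype.card W) :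
    domPoly (corona G H) =
      (X * (1 + X) ^ Fintype.card W + domPoly H) ^ Fintype.card V :=
  domPoly_corona_general G H hm
end

section
/- Let G be a finite simple graph and v ∈ V(G). Then v is domination-covered in G if and only if there exists a vertex u adjacent to v in G such that N_G[u] ⊆ N_G[v]. -/
open Polynomial

variable {V W : Type*}

/-- A vertex `v` is domination-covered in `G`: every dominating set of `G − v`
contains a vertex adjacent to `v` in `G`. -/
def DomCovered (G : SimpleGraph V) (v : V) : Prop :=
  ∀ S : Finset V, v ∉ S → (∀ u, u ≠ v → u ∉ S → ∃ w ∈ S, G.Adj w u) →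
    ∃ w ∈ S, G.Adj w v

/-- A vertex `v` is domination-covered iff it has a neighbour `u`
whose closed neighbourhood is contained in that of `v`. -/
theorem domCovered_iff {V : Type*} [Fintype V] (G : SimpleGraph V) (v : V) :
    DomCovered G v ↔
      ∃ u, G.Adj u v ∧
        insert u (G.neighborSet u) ⊆ insert v (G.neighborSet v) := by
  classical
  constructor
  · intro h
    by_contra hno
    push_neg at hno
    set S : Finset V := Finset.univ.filter (fun w => ¬ (w = v ∨ G.Adj v w)) with hS
    have hv : v ∉ S := by simp [hS]
    have hdom : ∀ u, u ≠ v → u ∉ S → ∃ w ∈ S, G.Adj w u := by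
      intro u hu huS
      have hadj : G.Adj v u := by
        simp only [hS, Finset.mem_filter, Finset.mem_univ, true_and, not_not] at huS
        rcases huS with rfl | h'
        · exact absurd rfl hu
        · exact h'
      have hns := hno u hadj.symm
      rw [Set.not_subset] at hns
      obtain ⟨w, hwin, hwout⟩ := hns
      have hwv : ¬ (w = v ∨ G.Adj v w) := by
        intro hc
        apply hwout
        rcases hc with rfl | hc
        · exact Set.mem_insert _ _
        · exact Set.mem_insert_of_mem _ hc
      refine ⟨w, by simp only [hS, Finset.mem_filter, Finset.mem_univ, true_and]; exact hwv, ?_⟩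
      rcases Set.mem_insert_iff.mp hwin with rfl | hw
      · exact absurd (Or.inr hadj) hwv
      · exact (SimpleGraph.mem_neighborSet _ _ _ |>.mp hw).symm
    obtain ⟨w, hwS, hwv⟩ := h S hv hdom
    simp only [hS, Finset.mem_filter, Finset.mem_univ, true_and] at hwS
    exact hwS (Or.inr hwv.symm)
  · rintro ⟨u, huv, hsub⟩ S hvS hdom
    by_cases hu : u ∈ S
    · exact ⟨u, hu, huv⟩
    · obtain ⟨w, hwS, hwu⟩ := hdom u (G.ne_of_adj huv) hu
      have : w ∈ insert v (G.neighborSet v) :=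
        hsub (Set.mem_insert_iff.mpr (Or.inr hwu.symm))
      rcases Set.mem_insert_iff.mp this with rfl | hw
      · exact absurd hwS hvS
      · exact ⟨w, hwS, hw.symm⟩
end

section
/- Let G be a finite simple graph and e = {u, v} ∈ E(G). Then e is an irrelevant edge of G (i.e., D(G, x) = D(G − e, x)) if and only if both u and v are domination-covered in the edge-deleted graph G − e. -/
open Polynomial

variable {V W : Type*}

open Classical in
lemma domPoly_coeff [Fintype V] (G : SimpleGraph V) (k : ℕ) :
    (domPoly G).coeff k =
      (((Finset.univ : Finset (Finset V)).filter
        (fun S => Dominates G S ∧ S.card = k)).card : ℤ) := by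
  rw [domPoly, Polynomial.finset_sum_coeff, Finset.card_filter, Nat.cast_sum]
  apply Finset.sum_congr rfl
  intro S _
  by_cases h : Dominates G S
  · by_cases hk : S.card = k
    · simp [h, hk]
    · have hk' : ¬ k = S.card := fun hh => hk hh.symm
      simp [h, hk, hk', Polynomial.coeff_X_pow]
  · simp [h]

/-- An edge `e = {u,v}` is irrelevant iff both `u` and `v` are
domination-covered in `G − e`. -/
theorem irrelevantEdge_iff {V : Type*} [Fintype V] (G : SimpleGraph V)
    (u v : V) (huv : G.Adj u v) :
    domPoly G = domPoly (G.deleteEdges {s(u, v)}) ↔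
      DomCovered (G.deleteEdges {s(u, v)}) u ∧
        DomCovered (G.deleteEdges {s(u, v)}) v := by
  classical
  set G' := G.deleteEdges {s(u, v)} with hG'
  have hne : u ≠ v := G.ne_of_adj huv
  have hadj' : ∀ a b, G'.Adj a b ↔ G.Adj a b ∧ ¬(a = u ∧ b = v ∨ a = v ∧ b = u) := by
    intro a b
    rw [hG', SimpleGraph.deleteEdges_adj]
    simp [Sym2.eq_iff]
  have hmono : ∀ S : Finset V, Dominates G' S → Dominates G S := by
    intro S h w hw
    obtain ⟨x, hx, hxw⟩ := h w hw
    exact ⟨x, hx, ((hadj' x w).1 hxw).1⟩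
  have key : domPoly G = domPoly G' ↔ ∀ S : Finset V, Dominates G S → Dominates G' S := by
    constructor
    · intro hpoly S hS
      have hk := congrArg (fun p => p.coeff S.card) hpoly
      simp only [domPoly_coeff, Nat.cast_inj] at hk
      have hsub : ((Finset.univ : Finset (Finset V)).filter
            (fun T => Dominates G' T ∧ T.card = S.card)) ⊆
          ((Finset.univ : Finset (Finset V)).filter
            (fun T => Dominates G T ∧ T.card = S.card)) := by
        intro T hT
        rw [Finset.mem_filter] at hT ⊢
        exact ⟨hT.1, hmono T hT.2.1, hT.2.2⟩
      have heq := Finset.eq_of_subset_of_card_le hsub (le_of_eq hk)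
      have hmem : S ∈ ((Finset.univ : Finset (Finset V)).filter
          (fun T => Dominates G T ∧ T.card = S.card)) := by
        simp [hS]
      rw [← heq] at hmem
      exact (Finset.mem_filter.1 hmem).2.1
    · intro h
      unfold domPoly
      apply Finset.sum_congr rfl
      intro S _
      exact if_congr ⟨h S, hmono S⟩ rfl rfl
  rw [key]
  constructor
  · intro h
    constructor
    · -- DomCovered G' u
      intro S hSu hdom
      have hT : Dominates G (insert v S) := by
        intro w hw
        rcases eq_or_ne w u with rfl | hwu
        · exact ⟨v, Finset.mem_insert_self _ _, huv.symm⟩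
        · obtain ⟨x, hx, hxw⟩ := hdom w hwu (fun hwS => hw (Finset.mem_insert_of_mem hwS))
          exact ⟨x, Finset.mem_insert_of_mem hx, ((hadj' x w).1 hxw).1⟩
      have hT' := h _ hT
      have huT : u ∉ insert v S := by
        simp [hne, hSu]
      obtain ⟨x, hx, hxu⟩ := hT' u huT
      have hxv : x ≠ v := fun hxv => ((hadj' x u).1 hxu).2 (Or.inr ⟨hxv, rfl⟩)
      rcases Finset.mem_insert.1 hx with rfl | hxS
      · exact absurd rfl hxv
      · exact ⟨x, hxS, hxu⟩
    · -- DomCovered G' v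
      intro S hSv hdom
      have hT : Dominates G (insert u S) := by
        intro w hw
        rcases eq_or_ne w v with rfl | hwv
        · exact ⟨u, Finset.mem_insert_self _ _, huv⟩
        · obtain ⟨x, hx, hxw⟩ := hdom w hwv (fun hwS => hw (Finset.mem_insert_of_mem hwS))
          exact ⟨x, Finset.mem_insert_of_mem hx, ((hadj' x w).1 hxw).1⟩
      have hT' := h _ hT
      have hvT : v ∉ insert u S := by
        simp [hne.symm, hSv]
      obtain ⟨x, hx, hxv⟩ := hT' v hvT
      have hxu : x ≠ u := fun hxu => ((hadj' x v).1 hxv).2 (Or.inl ⟨hxu, rfl⟩)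
      rcases Finset.mem_insert.1 hx with rfl | hxS
      · exact absurd rfl hxu
      · exact ⟨x, hxS, hxv⟩
  · rintro ⟨hu, hv⟩ S hS w hw
    obtain ⟨x, hx, hxw⟩ := hS w hw
    by_cases hx' : G'.Adj x w
    · exact ⟨x, hx, hx'⟩
    · have hcase : x = u ∧ w = v ∨ x = v ∧ w = u := by
        by_contra hc
        exact hx' ((hadj' x w).2 ⟨hxw, hc⟩)
      rcases hcase with ⟨rfl, rfl⟩ | ⟨rfl, rfl⟩
      · -- w = v, x = u ∈ S
        apply hv S hw
        intro y hyv hyS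
        obtain ⟨z, hz, hzy⟩ := hS y hyS
        refine ⟨z, hz, (hadj' z y).2 ⟨hzy, ?_⟩⟩
        rintro (⟨rfl, rfl⟩ | ⟨rfl, rfl⟩)
        · exact hyv rfl
        · exact hw hz
      · -- w = u, x = v ∈ S
        apply hu S hw
        intro y hyu hyS
        obtain ⟨z, hz, hzy⟩ := hS y hyS
        refine ⟨z, hz, (hadj' z y).2 ⟨hzy, ?_⟩⟩
        rintro (⟨rfl, rfl⟩ | ⟨rfl, rfl⟩)
        · exact hw hz
        · exact hyu rfl
end

section
/- For every natural number n ≥ 1, the domination polynomial of the graph H_{2n} satisfies D(H_{2n}, x) = (x⁴ + 4x³ + 6x² + 2x)^n. -/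
open Polynomial

variable {V W : Type*}

/-- Stevanović's clique cover construction `C{G}`. -/
def cliqueCoverConstruction (G : SimpleGraph V) {k : ℕ} (C : Fin k → Finset V) :
    SimpleGraph (V ⊕ Fin k × Fin 2) where
  Adj x y :=
    match x, y with
    | Sum.inl a, Sum.inl b => G.Adj a b
    | Sum.inl a, Sum.inr (i, _) => a ∈ C i
    | Sum.inr (i, _), Sum.inl a => a ∈ C i
    | Sum.inr _, Sum.inr _ => False
  symm := by
    constructor
    rintro (a | ⟨i, t⟩) (b | ⟨j, s⟩) h
    · exact G.adj_symm h
    · exact h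
    · exact h
    · exact h.elim
  loopless := by
    constructor
    rintro (a | ⟨i, t⟩) h
    · exact G.irrefl h
    · exact h

/-- clique cover of the even path -/
def evenCover (n : ℕ) : Fin n → Finset (Fin (2 * n)) :=
  fun i => {⟨2 * i.val, by have := i.isLt; omega⟩, ⟨2 * i.val + 1, by have := i.isLt; omega⟩}

/-- The graph `H_{2n}`. -/
def H2n (n : ℕ) : SimpleGraph (Fin (2 * n) ⊕ Fin n × Fin 2) :=
  cliqueCoverConstruction (SimpleGraph.pathGraph (2 * n)) (evenCover n)

/-!
In `C{G}`, where the cliques `C i` partition `V`, a set `S` dominates exactly when, for every `i`,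
it meets `C i` or contains both new vertices attached to `C i`: a vertex of `S ∩ C i` dominates the
whole clique and both new vertices, and otherwise the new vertices, whose only neighbours lie in
`C i`, must lie in `S`. These conditions live on the disjoint blocks `C i ∪ {new vertices}`, so
the domination polynomial is a product over blocks. In a block with `m + 2` vertices the subsets
violating the condition are the proper subsets of the pair of new vertices, so the factor is
`(x + 1)^(m + 2) - (2x + 1)`. The pairs `{v_{2i-1}, v_{2i}}` partition `P_{2n}` into edges, and
`(x + 1)^4 - 2x - 1 = x^4 + 4x^3 + 6x^2 + 2x`.
-/

open Finset

theorem Finset.biUnion_univ_inter_eq_self {ι α : Type*} [Fintype ι] [DecidableEq α]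
    {B : ι → Finset α} (hB : ∀ a, ∃ i, a ∈ B i) (S : Finset α) :
    univ.biUnion (fun i ↦ S ∩ B i) = S := by
  rw [← inter_biUnion, inter_eq_left]
  intro a _
  simpa using hB a

theorem Finset.sum_prod_inter_eq_prod_sum_powerset {ι α M : Type*} [Fintype ι] [DecidableEq ι]
    [Fintype α] [DecidableEq α] [CommSemiring M] {B : ι → Finset α} (hB : ∀ a, ∃! i, a ∈ B i)
    (g : ι → Finset α → M) :
    ∑ S : Finset α, ∏ i, g i (S ∩ B i) = ∏ i, ∑ T ∈ (B i).powerset, g i T := by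
  rw [prod_univ_sum]
  refine sum_nbij' (fun S i ↦ S ∩ B i) (fun T ↦ univ.biUnion T) ?_ ?_ ?_ ?_ ?_
  · simp [Fintype.mem_piFinset]
  · simp
  · exact fun S _ ↦ biUnion_univ_inter_eq_self (fun a ↦ (hB a).exists) S
  · intro T hT
    funext i
    ext a
    simp only [Fintype.mem_piFinset, mem_powerset] at hT
    simp only [mem_inter, mem_biUnion, mem_univ, true_and]
    refine ⟨fun ⟨⟨j, hj⟩, hi⟩ ↦ ?_, fun ha ↦ ⟨⟨i, ha⟩, hT i ha⟩⟩
    rwa [(hB a).unique hi (hT j hj)]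
  · exact fun _ _ ↦ rfl

theorem Finset.card_eq_sum_card_inter {ι α : Type*} [Fintype ι] [DecidableEq α]
    {B : ι → Finset α} (hB : ∀ a, ∃! i, a ∈ B i) (S : Finset α) :
    #S = ∑ i, #(S ∩ B i) := by
  rw [← card_biUnion]
  · rw [biUnion_univ_inter_eq_self (fun a ↦ (hB a).exists)]
  · intro i _ j _ hij
    simp only [Function.onFun, disjoint_left, mem_inter]
    exact fun a ha ha' ↦ hij ((hB a).unique ha.2 ha'.2)

namespace cliqueCoverConstruction

variable {V : Type*} {G : SimpleGraph V} {k : ℕ} {C : Fin k → Finset V}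

def block (C : Fin k → Finset V) (i : Fin k) : Finset (V ⊕ Fin k × Fin 2) :=
  (C i).disjSum ({i} ×ˢ univ)

def twins (i : Fin k) : Finset (V ⊕ Fin k × Fin 2) :=
  ({i} ×ˢ univ).map .inr

def DominatesBlock (C : Fin k → Finset V) (i : Fin k) (S : Finset (V ⊕ Fin k × Fin 2)) : Prop :=
  (∃ a ∈ C i, Sum.inl a ∈ S) ∨ twins i ⊆ S

@[simp] theorem mem_twins {i : Fin k} {x : V ⊕ Fin k × Fin 2} :
    x ∈ twins i ↔ ∃ t, x = .inr (i, t) := by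
  simp [twins, eq_comm]

instance [DecidableEq V] (i : Fin k) : DecidablePred (DominatesBlock C i) :=
  fun _ ↦ inferInstanceAs (Decidable (_ ∨ _))

theorem existsUnique_mem_block (hC : ∀ v, ∃! i, v ∈ C i) (x : V ⊕ Fin k × Fin 2) :
    ∃! i, x ∈ block C i := by
  rcases x with a | ⟨j, t⟩
  · simpa [block] using hC a
  · exact ⟨j, by simp [block], fun i ↦ by simp [block, eq_comm]⟩

theorem twins_subset_block (C : Fin k → Finset V) (i : Fin k) : twins i ⊆ block C i := by
  intro x hx
  obtain ⟨t, rfl⟩ := mem_twins.1 hx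
  simp [block]

theorem card_block (C : Fin k → Finset V) (i : Fin k) : #(block C i) = #(C i) + 2 := by
  simp [block]

theorem card_twins (i : Fin k) : #(twins i : Finset (V ⊕ Fin k × Fin 2)) = 2 := by
  simp [twins]

theorem filter_not_dominatesBlock [DecidableEq V] (i : Fin k) :
    {T ∈ (block C i).powerset | ¬DominatesBlock C i T} = (twins i).ssubsets := by
  ext T
  have subset_twins_iff : T ⊆ twins i ↔ T ⊆ block C i ∧ ∀ a ∈ C i, .inl a ∉ T := by
    refine ⟨fun h ↦ ⟨h.trans (twins_subset_block C i), fun a _ ha ↦ by simpa using h ha⟩, ?_⟩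
    rintro ⟨hT, hCi⟩ (a | ⟨j, t⟩) hx
    · exact absurd hx (hCi a (by simpa [block] using hT hx))
    · simpa [block, eq_comm] using hT hx
  simp only [mem_filter, mem_powerset, mem_ssubsets, Finset.ssubset_iff_subset_ne,
    DominatesBlock, not_or, not_exists, not_and]
  rw [← and_assoc, ← subset_twins_iff]
  exact and_congr_right fun h ↦ not_congr ⟨subset_antisymm h, fun he ↦ he.symm.subset⟩

theorem dominatesBlock_inter_block_iff [DecidableEq V] {i : Fin k}
    {S : Finset (V ⊕ Fin k × Fin 2)} :
    DominatesBlock C i (S ∩ block C i) ↔ DominatesBlock C i S := by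
  unfold DominatesBlock
  rw [subset_inter_iff, and_iff_left (twins_subset_block C i)]
  exact or_congr_left (exists_congr fun a ↦ and_congr_right fun ha ↦ by simp [block, ha])

theorem dominates_iff (hC : ∀ v, ∃ i, v ∈ C i) (hclique : ∀ i, G.IsClique (C i : Set V))
    (S : Finset (V ⊕ Fin k × Fin 2)) :
    Dominates (cliqueCoverConstruction G C) S ↔ ∀ i, DominatesBlock C i S := by
  constructor
  · intro h i
    by_contra hi
    simp only [DominatesBlock, not_or, not_exists, not_and, not_subset, mem_twins] at hi
    obtain ⟨hCi, _, ⟨t, rfl⟩, ht⟩ := hi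
    obtain ⟨a | _, haS, hadj⟩ := h _ ht
    · exact hCi a hadj haS
    · exact hadj
  · rintro h (a | ⟨i, t⟩) hv
    · obtain ⟨i, ha⟩ := hC a
      obtain ⟨b, hb, hbS⟩ | hpair := h i
      · have hba : b ≠ a := by rintro rfl; exact hv hbS
        exact ⟨_, hbS, hclique i hb ha hba⟩
      · exact ⟨_, hpair (mem_twins.2 ⟨0, rfl⟩), ha⟩
    · obtain ⟨b, hb, hbS⟩ | hpair := h i
      · exact ⟨_, hbS, hb⟩
      · exact absurd (hpair (mem_twins.2 ⟨t, rfl⟩)) hv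

theorem sum_powerset_block [DecidableEq V] {R : Type*} [CommRing R] (x : R) (i : Fin k) :
    ∑ T ∈ (block C i).powerset, (if DominatesBlock C i T then x ^ #T else 0)
      = (x + 1) ^ (#(C i) + 2) - 2 * x - 1 := by
  have sum_powerset (s : Finset (V ⊕ Fin k × Fin 2)) :
      ∑ T ∈ s.powerset, x ^ #T = (x + 1) ^ #s := by
    simpa using sum_pow_mul_eq_add_pow x 1 s
  calc ∑ T ∈ (block C i).powerset, (if DominatesBlock C i T then x ^ #T else 0)
      = ∑ T ∈ (block C i).powerset, x ^ #T - ∑ T ∈ (twins (V := V) i).ssubsets, x ^ #T := by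
        rw [← sum_filter, ← filter_not_dominatesBlock, eq_sub_iff_add_eq,
          sum_filter_add_sum_filter_not]
    _ = (x + 1) ^ (#(C i) + 2) - ((x + 1) ^ 2 - x ^ 2) := by
        rw [Finset.ssubsets, sum_erase_eq_sub (mem_powerset_self _), sum_powerset, sum_powerset,
          card_block, card_twins]
    _ = (x + 1) ^ (#(C i) + 2) - 2 * x - 1 := by ring

theorem domPoly_eq_prod [Fintype V] [DecidableEq V] (hC : ∀ v, ∃! i, v ∈ C i)
    (hclique : ∀ i, G.IsClique (C i : Set V)) :
    domPoly (cliqueCoverConstruction G C) = ∏ i, ((X + 1) ^ (#(C i) + 2) - 2 * X - 1) := by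
  have hB := existsUnique_mem_block hC
  calc domPoly (cliqueCoverConstruction G C)
      = ∑ S, ∏ i, if DominatesBlock C i (S ∩ block C i) then X ^ #(S ∩ block C i) else 0 := by
        refine sum_congr rfl fun S _ ↦ ?_
        simp only [Fintype.prod_ite_zero, dominatesBlock_inter_block_iff, prod_pow_eq_pow_sum,
          ← card_eq_sum_card_inter hB, dominates_iff (fun v ↦ (hC v).exists) hclique]
    _ = ∏ i, ((X + 1) ^ (#(C i) + 2) - 2 * X - 1) := by
        rw [sum_prod_inter_eq_prod_sum_powerset hB
          (fun i T ↦ if DominatesBlock C i T then X ^ #T else 0)]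
        exact prod_congr rfl fun i _ ↦ sum_powerset_block X i

end cliqueCoverConstruction

section evenCover

variable {n : ℕ}

theorem existsUnique_mem_evenCover (v : Fin (2 * n)) : ∃! i, v ∈ evenCover n i := by
  refine ⟨⟨v / 2, by omega⟩, ?_, fun i hi ↦ ?_⟩
  · simp only [evenCover, mem_insert, mem_singleton, Fin.ext_iff]
    omega
  · simp only [evenCover, mem_insert, mem_singleton, Fin.ext_iff] at hi ⊢
    omega

theorem isClique_evenCover (i : Fin n) :
    (SimpleGraph.pathGraph (2 * n)).IsClique (evenCover n i : Set (Fin (2 * n))) := by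
  rw [evenCover, coe_pair, SimpleGraph.isClique_pair]
  simp [SimpleGraph.pathGraph_adj]

theorem card_evenCover (i : Fin n) : #(evenCover n i) = 2 :=
  card_pair (by simp [Fin.ext_iff])

end evenCover

theorem domPoly_H2n_general (n : ℕ) :
    domPoly (H2n n) = (X ^ 4 + 4 * X ^ 3 + 6 * X ^ 2 + 2 * X) ^ n := by
  rw [H2n, cliqueCoverConstruction.domPoly_eq_prod existsUnique_mem_evenCover isClique_evenCover]
  simp only [card_evenCover, prod_const, card_univ, Fintype.card_fin]
  ring

/-- The domination polynomial of `H_{2n}`. -/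
theorem domPoly_H2n (n : ℕ) (hn : 1 ≤ n) :
    domPoly (H2n n) = (X ^ 4 + 4 * X ^ 3 + 6 * X ^ 2 + 2 * X) ^ n :=
  domPoly_H2n_general n
end

section
/- For n ≥ 2, let e_i = {v_{2i}, v_{2i+1}} (for 1 ≤ i ≤ n−1) be the path edges of H_{2n} joining consecutive blocks, i.e., the edges whose end-vertices have degree four in H_{2n}. Then for every subset F of {e₁, …, e_{n−1}}, the graph obtained from H_{2n} by deleting the edges of F has the same domination polynomial as H_{2n}. -/
open Polynomial

variable {V W : Type*}

/-!
In `H_{2n} = C{P_{2n}}` each block `{v_{2i-1}, v_{2i}}` is a clique of the path and carries two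
twins adjacent to that block only. Hence `S` dominates `H_{2n}` iff every block has a vertex in
`S` or both of its twins in `S`: a path vertex outside `S` is dominated by a twin of its block or,
failing that, by the vertex of its block that dominates the missing twin. This criterion ignores
the edges between blocks, so deleting any of them leaves every dominating set dominating.
-/

theorem domPoly_congr [Fintype V] {G G' : SimpleGraph V}
    (h : ∀ S, Dominates G S ↔ Dominates G' S) : domPoly G = domPoly G' := by
  classical
  exact Finset.sum_congr rfl fun S _ => if_congr (h S) rfl rfl

section cliqueCoverConstruction

variable {G G' : SimpleGraph V} {k : ℕ} {C : Fin k → Finset V}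

@[simp]
theorem cliqueCoverConstruction_adj_inl_inl (a b : V) :
    (cliqueCoverConstruction G C).Adj (.inl a) (.inl b) ↔ G.Adj a b := Iff.rfl

@[simp]
theorem cliqueCoverConstruction_adj_inl_inr (a : V) (p : Fin k × Fin 2) :
    (cliqueCoverConstruction G C).Adj (.inl a) (.inr p) ↔ a ∈ C p.1 := Iff.rfl

@[simp]
theorem cliqueCoverConstruction_adj_inr_inl (p : Fin k × Fin 2) (a : V) :
    (cliqueCoverConstruction G C).Adj (.inr p) (.inl a) ↔ a ∈ C p.1 := Iff.rfl

@[simp]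
theorem cliqueCoverConstruction_not_adj_inr_inr (p q : Fin k × Fin 2) :
    ¬(cliqueCoverConstruction G C).Adj (.inr p) (.inr q) := id

theorem dominates_cliqueCoverConstruction_iff (hclique : ∀ i, G.IsClique (C i : Set V))
    (hcover : ∀ a, ∃ i, a ∈ C i) (S : Finset (V ⊕ Fin k × Fin 2)) :
    Dominates (cliqueCoverConstruction G C) S ↔
      ∀ i, (∀ t, .inr (i, t) ∈ S) ∨ ∃ a ∈ C i, .inl a ∈ S := by
  constructor
  · intro hS i
    refine or_iff_not_imp_left.2 fun hpend => ?_
    obtain ⟨t, ht⟩ := not_forall.1 hpend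
    obtain ⟨_ | _, hu, hadj⟩ := hS _ ht
    · exact ⟨_, hadj, hu⟩
    · exact (cliqueCoverConstruction_not_adj_inr_inr _ _ hadj).elim
  · rintro hS (a | ⟨i, t⟩) hv
    · obtain ⟨i, hai⟩ := hcover a
      rcases hS i with hpend | ⟨b, hbi, hb⟩
      · exact ⟨_, hpend 0, hai⟩
      · have hba : b ≠ a := by rintro rfl; exact hv hb
        exact ⟨_, hb, hclique i hbi hai hba⟩
    · rcases hS i with hpend | ⟨b, hbi, hb⟩
      · exact (hv (hpend t)).elim
      · exact ⟨_, hb, hbi⟩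

theorem domPoly_cliqueCoverConstruction_congr [Fintype V]
    (hclique : ∀ i, G.IsClique (C i : Set V)) (hclique' : ∀ i, G'.IsClique (C i : Set V))
    (hcover : ∀ a, ∃ i, a ∈ C i) :
    domPoly (cliqueCoverConstruction G C) = domPoly (cliqueCoverConstruction G' C) :=
  domPoly_congr fun S => by
    rw [dominates_cliqueCoverConstruction_iff hclique hcover,
      dominates_cliqueCoverConstruction_iff hclique' hcover]

theorem cliqueCoverConstruction_deleteEdges {F : Set (Sym2 (V ⊕ Fin k × Fin 2))}
    (hF : ∀ a p, s(.inl a, .inr p) ∉ F) :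
    (cliqueCoverConstruction G C).deleteEdges F =
      cliqueCoverConstruction (G.deleteEdges (Sym2.map Sum.inl ⁻¹' F)) C := by
  ext (a | p) (b | q)
  · simp
  · simpa using fun _ => hF a q
  · simpa [Sym2.eq_swap] using fun _ => hF b p
  · simp

end cliqueCoverConstruction

theorem exists_mem_evenCover {n : ℕ} (a : Fin (2 * n)) : ∃ i, a ∈ evenCover n i :=
  ⟨⟨a / 2, by omega⟩, by
    simp only [evenCover, Finset.mem_insert, Finset.mem_singleton, Fin.ext_iff]
    omega⟩

theorem isClique_evenCover_s7 {n : ℕ} {F : Set (Sym2 (Fin (2 * n)))}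
    (hF : ∀ a b : Fin (2 * n), a.val / 2 = b.val / 2 → s(a, b) ∉ F) (i : Fin n) :
    ((SimpleGraph.pathGraph (2 * n)).deleteEdges F).IsClique
      (evenCover n i : Set (Fin (2 * n))) := by
  rw [evenCover, Finset.coe_pair, SimpleGraph.isClique_pair]
  intro _
  simp only [SimpleGraph.deleteEdges_adj, SimpleGraph.pathGraph_adj]
  exact ⟨by simp, hF _ _ (by simp; omega)⟩

/-- Vertices are indexed from `0`, so the paper's edge `e_i = {v_{2i}, v_{2i+1}}` is
`s(inl (2i - 1), inl (2i))`. -/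
theorem domPoly_H2n_deleteEdges (n : ℕ)
    (F : Set (Sym2 (Fin (2 * n) ⊕ Fin n × Fin 2)))
    (hF : F ⊆ {e | ∃ (i : ℕ) (_ : 1 ≤ i) (_ : i ≤ n - 1),
      e = s(Sum.inl ⟨2 * i - 1, by omega⟩, Sum.inl ⟨2 * i, by omega⟩)}) :
    domPoly ((H2n n).deleteEdges F) = domPoly (H2n n) := by
  have hmixed : ∀ a p, s(.inl a, .inr p) ∉ F := fun a p h => by
    obtain ⟨i, _, _, he⟩ := hF h
    simp at he
  have hblock : ∀ a b : Fin (2 * n), a.val / 2 = b.val / 2 →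
      s(a, b) ∉ Sym2.map Sum.inl ⁻¹' F := by
    intro a b hab h
    obtain ⟨i, _, _, he⟩ := hF h
    simp only [Sym2.map_mk, Sym2.eq_iff, Sum.inl.injEq, Fin.ext_iff] at he
    omega
  rw [H2n, cliqueCoverConstruction_deleteEdges hmixed]
  exact domPoly_cliqueCoverConstruction_congr (isClique_evenCover_s7 hblock)
    (fun i => by simpa using isClique_evenCover_s7 (F := ∅) (by simp) i) exists_mem_evenCover
end

section
/- Let G and H be finite simple graphs, let C = {C₁, …, C_k} be a clique cover of G, and let U ⊆ V(H) be such that there exists u ∈ U with N_H[u] ⊆ U. Then D(G^C ⋆ H^U, x) = Π_{i=1}^k D(H*_i, x), where H*_i is the graph of order |V(H)| + |C_i| obtained from the disjoint union of the complete graph on |C_i| vertices and a copy of H by joining every vertex of the complete graph to every vertex of U. -/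
open Polynomial

variable {V W : Type*}

/-- The clique cover product `G^C ⋆ H^U`. -/
def cliqueCoverProduct (G : SimpleGraph V) (H : SimpleGraph W) {k : ℕ}
    (C : Fin k → Finset V) (U : Set W) : SimpleGraph (V ⊕ Fin k × W) where
  Adj x y :=
    match x, y with
    | Sum.inl a, Sum.inl b => G.Adj a b
    | Sum.inl a, Sum.inr (i, w) => a ∈ C i ∧ w ∈ U
    | Sum.inr (i, w), Sum.inl a => a ∈ C i ∧ w ∈ U
    | Sum.inr (i, w), Sum.inr (j, w') => i = j ∧ H.Adj w w'
  symm := by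
    constructor
    rintro (a | ⟨i, w⟩) (b | ⟨j, w'⟩) h
    · exact G.adj_symm h
    · exact h
    · exact h
    · exact ⟨h.1.symm, H.adj_symm h.2⟩
  loopless := by
    constructor
    rintro (a | ⟨i, w⟩) h
    · exact G.irrefl h
    · exact H.irrefl h.2

/-- `C` is a clique cover of `G`: a partition of the vertices into cliques. -/
def IsCliqueCover (G : SimpleGraph V) {k : ℕ} (C : Fin k → Finset V) : Prop :=
  (∀ i, (C i).Nonempty) ∧ (∀ v, ∃! i, v ∈ C i) ∧ ∀ i, G.IsClique (C i : Set V)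

/-- The graph obtained from `K_m ∪ H` by joining every vertex of `K_m` to every vertex of `U`. -/
def starPiece (H : SimpleGraph W) (U : Set W) (m : ℕ) : SimpleGraph (Fin m ⊕ W) where
  Adj x y :=
    match x, y with
    | Sum.inl a, Sum.inl b => a ≠ b
    | Sum.inl _, Sum.inr w => w ∈ U
    | Sum.inr w, Sum.inl _ => w ∈ U
    | Sum.inr w, Sum.inr w' => H.Adj w w'
  symm := by
    constructor
    rintro (a | w) (b | w') h
    · exact h.symm
    · exact h
    · exact h
    · exact H.adj_symm h
  loopless := by
    constructor
    rintro (a | w) h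
    · exact h rfl
    · exact H.irrefl h

/-!
Block `i` of `G^C ⋆ H^U` (the clique `C i` together with the `i`-th copy of `H`) induces
`H*_i`. A vertex of a copy of `H` has all its neighbours in its own block. A vertex of `C i`
also has neighbours outside the block, but it never needs them: the copy of `u` is either in
`S` or dominated inside its block by a vertex of `C i ∪ N_H(u) ⊆ C i ∪ U`, and such a vertex
is adjacent to all of `C i`. So `S` dominates `G^C ⋆ H^U` iff its trace on every block
dominates `H*_i`, and since the blocks partition the vertex set, the domination polynomial
factors over them.
-/

section Relabel

variable {V' : Type*} {G : SimpleGraph V} {G' : SimpleGraph V'}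

lemma dominates_map_iff (φ : G ≃g G') (S : Finset V) :
    Dominates G' (S.map φ.toEquiv.toEmbedding) ↔ Dominates G S := by
  simp only [Dominates, φ.toEquiv.symm.forall_congr_left, φ.toEquiv.symm.exists_congr_left,
    Equiv.symm_symm, Finset.mem_map_equiv, Equiv.symm_apply_apply]
  simp only [RelIso.coe_fn_toEquiv, φ.map_adj_iff]

lemma domPoly_congr_s9 [Fintype V] [Fintype V'] (φ : G ≃g G') : domPoly G = domPoly G' := by
  unfold domPoly
  rw [← φ.toEquiv.finsetCongr.sum_comp]
  refine Finset.sum_congr rfl fun S _ => ?_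
  rw [Equiv.finsetCongr_apply, Finset.card_map, dominates_map_iff]

end Relabel

section Sigma

variable {ι : Type*} {α : ι → Type*} [Fintype ι] [∀ i, Fintype (α i)]
  [DecidableEq ι] [∀ i, DecidableEq (α i)]

def finsetSigmaEquiv : Finset (Σ i, α i) ≃ ∀ i, Finset (α i) where
  toFun T i := {a | ⟨i, a⟩ ∈ T}
  invFun f := Finset.univ.sigma f
  left_inv T := by ext ⟨i, a⟩; simp
  right_inv f := by ext i a; simp

@[simp]
lemma mem_finsetSigmaEquiv {T : Finset (Σ i, α i)} {i : ι} {a : α i} :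
    a ∈ finsetSigmaEquiv T i ↔ ⟨i, a⟩ ∈ T := by
  simp [finsetSigmaEquiv]

lemma sum_card_finsetSigmaEquiv (T : Finset (Σ i, α i)) :
    ∑ i, (finsetSigmaEquiv T i).card = T.card := by
  conv_rhs => rw [← finsetSigmaEquiv.symm_apply_apply T]
  exact (Finset.card_sigma _ _).symm

lemma domPoly_eq_prod_of_dominates_iff {G : SimpleGraph (Σ i, α i)}
    (G' : ∀ i, SimpleGraph (α i))
    (h : ∀ T, Dominates G T ↔ ∀ i, Dominates (G' i) (finsetSigmaEquiv T i)) :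
    domPoly G = ∏ i, domPoly (G' i) := by
  classical
  calc domPoly G
      = ∑ T : Finset (Σ i, α i), ∏ i, if Dominates (G' i) (finsetSigmaEquiv T i)
          then (X : ℤ[X]) ^ (finsetSigmaEquiv T i).card else 0 := by
        refine Fintype.sum_congr _ _ fun T => ?_
        rw [Fintype.prod_ite_zero, Finset.prod_pow_eq_pow_sum, sum_card_finsetSigmaEquiv]
        exact if_congr (h T) rfl rfl
    _ = ∑ f : ∀ i, Finset (α i),
          ∏ i, if Dominates (G' i) (f i) then (X : ℤ[X]) ^ (f i).card else 0 :=
        finsetSigmaEquiv.sum_comp fun f => ∏ i, if Dominates (G' i) (f i)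
          then (X : ℤ[X]) ^ (f i).card else 0
    _ = ∏ i, domPoly (G' i) := by
        simp only [domPoly, Finset.prod_univ_sum, Fintype.piFinset_univ]

end Sigma

section CliqueJoin

variable (H : SimpleGraph W) (U : Set W)

def cliqueJoin (α : Type*) : SimpleGraph (α ⊕ W) where
  Adj x y :=
    match x, y with
    | Sum.inl a, Sum.inl b => a ≠ b
    | Sum.inl _, Sum.inr w => w ∈ U
    | Sum.inr w, Sum.inl _ => w ∈ U
    | Sum.inr w, Sum.inr w' => H.Adj w w'
  symm := by
    constructor
    rintro (a | w) (b | w') h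
    · exact h.symm
    · exact h
    · exact h
    · exact H.adj_symm h
  loopless := by
    constructor
    rintro (a | w) h
    · exact h rfl
    · exact H.irrefl h

lemma starPiece_eq_cliqueJoin (m : ℕ) : starPiece H U m = cliqueJoin H U (Fin m) := by
  ext (a | w) (b | w') <;> rfl

def cliqueJoinCongr {α β : Type*} (e : α ≃ β) : cliqueJoin H U α ≃g cliqueJoin H U β where
  toEquiv := e.sumCongr (Equiv.refl W)
  map_rel_iff' := by
    rintro (a | w) (b | w') <;> simp [cliqueJoin]

end CliqueJoin

section CliqueCover

variable {k : ℕ} {C : Fin k → Finset V}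

noncomputable def blockEquiv (hpart : ∀ v, ∃! i, v ∈ C i) :
    V ⊕ Fin k × W ≃ Σ i, (C i ⊕ W) where
  toFun
    | Sum.inl v => ⟨(hpart v).exists.choose, Sum.inl ⟨v, (hpart v).exists.choose_spec⟩⟩
    | Sum.inr (i, w) => ⟨i, Sum.inr w⟩
  invFun
    | ⟨_, Sum.inl a⟩ => Sum.inl a
    | ⟨i, Sum.inr w⟩ => Sum.inr (i, w)
  left_inv := by rintro (v | ⟨i, w⟩) <;> rfl
  right_inv := by
    rintro ⟨i, ⟨v, hv⟩ | w⟩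
    · obtain rfl := (hpart v).unique hv (hpart v).exists.choose_spec
      rfl
    · rfl

variable {G : SimpleGraph V} {H : SimpleGraph W} {U : Set W} (hpart : ∀ v, ∃! i, v ∈ C i)

lemma comap_blockEquiv_adj_mk_mk (hclique : ∀ i, G.IsClique (C i : Set V)) {i : Fin k}
    {x y : C i ⊕ W} :
    ((cliqueCoverProduct G H C U).comap (blockEquiv hpart).symm).Adj ⟨i, x⟩ ⟨i, y⟩ ↔
      (cliqueJoin H U (C i)).Adj x y := by
  rcases x with a | w <;> rcases y with b | w'
  · exact ⟨fun h hab => G.ne_of_adj h (congrArg Subtype.val hab),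
      fun h => hclique i a.2 b.2 (Subtype.val_injective.ne h)⟩
  · exact ⟨And.right, fun h => ⟨a.2, h⟩⟩
  · exact ⟨And.right, fun h => ⟨b.2, h⟩⟩
  · exact ⟨And.right, fun h => ⟨rfl, h⟩⟩

lemma comap_blockEquiv_fst_eq_of_adj_inr {d : Σ i, (C i ⊕ W)} {i : Fin k} {w : W}
    (h : ((cliqueCoverProduct G H C U).comap (blockEquiv hpart).symm).Adj d ⟨i, Sum.inr w⟩) :
    d.1 = i := by
  rcases d with ⟨j, ⟨a, ha⟩ | w'⟩
  · exact (hpart a).unique ha h.1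
  · exact h.1

lemma dominates_comap_blockEquiv_iff [Fintype W] [DecidableEq V] [DecidableEq W]
    (hclique : ∀ i, G.IsClique (C i : Set V)) (hU : ∃ u ∈ U, ∀ w, H.Adj u w → w ∈ U)
    (T : Finset (Σ i, (C i ⊕ W))) :
    Dominates ((cliqueCoverProduct G H C U).comap (blockEquiv hpart).symm) T ↔
      ∀ i, Dominates (cliqueJoin H U (C i)) (finsetSigmaEquiv T i) := by
  constructor
  · intro hT i
    obtain ⟨u, huU, hNu⟩ := hU
    have hclique_dominated : ∃ d ∈ finsetSigmaEquiv T i,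
        ∀ a, Sum.inl a ∉ finsetSigmaEquiv T i → (cliqueJoin H U (C i)).Adj d (Sum.inl a) := by
      by_cases hu : Sum.inr u ∈ finsetSigmaEquiv T i
      · exact ⟨Sum.inr u, hu, fun _ _ => huU⟩
      obtain ⟨⟨j, d⟩, hd, hadj⟩ := hT ⟨i, Sum.inr u⟩ (by simpa using hu)
      obtain rfl := comap_blockEquiv_fst_eq_of_adj_inr hpart hadj
      have hdu := (comap_blockEquiv_adj_mk_mk hpart hclique).1 hadj
      refine ⟨d, by simpa using hd, ?_⟩
      rcases d with b | w
      · rintro a ha rfl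
        exact ha (by simpa using hd)
      · exact fun _ _ => hNu w (H.adj_symm hdu)
    rintro (a | w) hx
    · obtain ⟨d, hd, hadj⟩ := hclique_dominated
      exact ⟨d, hd, hadj a hx⟩
    · obtain ⟨⟨j, d⟩, hd, hadj⟩ := hT ⟨i, Sum.inr w⟩ (by simpa using hx)
      obtain rfl := comap_blockEquiv_fst_eq_of_adj_inr hpart hadj
      exact ⟨d, by simpa using hd, (comap_blockEquiv_adj_mk_mk hpart hclique).1 hadj⟩
  · rintro h ⟨i, x⟩ hx
    obtain ⟨d, hd, hadj⟩ := h i x (by simpa using hx)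
    exact ⟨⟨i, d⟩, by simpa using hd, (comap_blockEquiv_adj_mk_mk hpart hclique).2 hadj⟩

end CliqueCover

/-- The domination polynomial of the clique cover product `G^C ⋆ H^U`,
assuming some `u ∈ U` has its closed neighbourhood inside `U`. -/
theorem domPoly_cliqueCoverProduct {V W : Type*} [Fintype V] [Fintype W]
    (G : SimpleGraph V) (H : SimpleGraph W) {k : ℕ} (C : Fin k → Finset V)
    (hC : IsCliqueCover G C) (U : Set W)
    (hU : ∃ u ∈ U, ∀ w, H.Adj u w → w ∈ U) :
    domPoly (cliqueCoverProduct G H C U) =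
      ∏ i : Fin k, domPoly (starPiece H U (C i).card) := by
  classical
  obtain ⟨-, hpart, hclique⟩ := hC
  calc domPoly (cliqueCoverProduct G H C U)
      = domPoly ((cliqueCoverProduct G H C U).comap (blockEquiv hpart).symm) :=
        (domPoly_congr_s9 (SimpleGraph.Iso.comap _ _)).symm
    _ = ∏ i, domPoly (cliqueJoin H U (C i)) :=
        domPoly_eq_prod_of_dominates_iff _ (dominates_comap_blockEquiv_iff hpart hclique hU)
    _ = ∏ i, domPoly (starPiece H U (C i).card) := by
        refine Fintype.prod_congr _ _ fun i => ?_
        rw [starPiece_eq_cliqueJoin]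
        exact domPoly_congr_s9 (cliqueJoinCongr H U (C i).equivFin)
end

section
/- Let G be a finite simple graph with clique cover C = {C₁, …, C_m} where |C_i| = k_i, and let H be the edgeless graph on s ≥ 1 vertices. Then the clique cover product G^C ⋆ H and the disjoint union of the k_i-stars S_{k₁,s} ∪ S_{k₂,s} ∪ … ∪ S_{k_m,s} have the same domination polynomial. -/
open Polynomial

variable {V W : Type*}

/-- The join of two graphs on disjoint vertex sets. -/
def graphJoin (G : SimpleGraph V) (H : SimpleGraph W) : SimpleGraph (V ⊕ W) where
  Adj x y :=
    match x, y with
    | Sum.inl a, Sum.inl b => G.Adj a b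
    | Sum.inr a, Sum.inr b => H.Adj a b
    | _, _ => True
  symm := by
    constructor
    rintro (a | a) (b | b) h
    · exact G.adj_symm h
    · trivial
    · trivial
    · exact H.adj_symm h
  loopless := by
    constructor
    rintro (a | a) h
    · exact G.irrefl h
    · exact H.irrefl h

/-- The `k`-star `S_{k,s}`: the join of `K_k` with the edgeless graph on `s` vertices. -/
def kstar (k s : ℕ) : SimpleGraph (Fin k ⊕ Fin s) :=
  graphJoin (⊤ : SimpleGraph (Fin k)) (⊥ : SimpleGraph (Fin s))

/-- Disjoint union of an indexed family of graphs. -/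
def sigmaGraph {ι : Type*} {V : ι → Type*} (G : ∀ i, SimpleGraph (V i)) :
    SimpleGraph (Σ i, V i) where
  Adj x y := ∃ (i : ι) (a b : V i), (G i).Adj a b ∧ x = ⟨i, a⟩ ∧ y = ⟨i, b⟩
  symm := by
    constructor
    rintro _ _ ⟨i, a, b, hadj, rfl, rfl⟩
    exact ⟨i, b, a, (G i).adj_symm hadj, rfl, rfl⟩
  loopless := by
    constructor
    rintro ⟨i, a⟩ ⟨j, c, d, hadj, h1, h2⟩
    obtain rfl : c = d := by
      have := h1.symm.trans h2
      simpa using this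
    exact (G j).irrefl hadj

/-!
The two graphs are not isomorphic (edges of `G` between different cliques have no counterpart
among the stars), but they have the same dominating sets under the natural vertex bijection.
In both, a set dominates iff for every `i` it meets the `i`-th clique or contains the whole
`i`-th copy of the edgeless graph: a vertex of that copy has neighbours only in the clique, and a
vertex of the clique is dominated from inside its clique or from any vertex of its copy.
-/

open Function

theorem domPoly_eq_of_equiv [Fintype V] [Fintype W] {G : SimpleGraph V} {H : SimpleGraph W}
    (e : V ≃ W) (h : ∀ S, Dominates G S ↔ Dominates H (S.map e.toEmbedding)) :
    domPoly G = domPoly H :=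
  Fintype.sum_equiv e.finsetCongr _ _ fun S => by
    classical
    simp only [Equiv.finsetCongr_apply, Finset.card_map]
    exact if_congr (h S) rfl rfl

theorem sigmaGraph_adj_mk_iff {ι : Type*} {α : ι → Type*} {G : ∀ i, SimpleGraph (α i)} {i : ι}
    {a : α i} {y : Σ i, α i} :
    (sigmaGraph G).Adj ⟨i, a⟩ y ↔ ∃ b, (G i).Adj a b ∧ y = ⟨i, b⟩ := by
  constructor
  · rintro ⟨j, c, d, hcd, hac, rfl⟩
    obtain ⟨rfl, hac⟩ := Sigma.mk.inj_iff.mp hac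
    obtain rfl := eq_of_heq hac
    exact ⟨d, hcd, rfl⟩
  · rintro ⟨b, hab, rfl⟩
    exact ⟨i, a, b, hab, rfl, rfl⟩

theorem dominates_cliqueCoverProduct_bot_iff [Nonempty W] {G : SimpleGraph V} {m : ℕ}
    {C : Fin m → Finset V} (hcover : ∀ v, ∃ i, v ∈ C i)
    (hclique : ∀ i, G.IsClique (C i : Set V)) (S : Finset (V ⊕ Fin m × W)) :
    Dominates (cliqueCoverProduct G (⊥ : SimpleGraph W) C Set.univ) S ↔
      ∀ i, (∃ a ∈ C i, Sum.inl a ∈ S) ∨ ∀ w, Sum.inr (i, w) ∈ S := by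
  constructor
  · intro hdom i
    refine or_iff_not_imp_right.2 fun hcopy => ?_
    push Not at hcopy
    obtain ⟨w, hw⟩ := hcopy
    obtain ⟨a | ⟨j, w'⟩, haS, hadj⟩ := hdom _ hw
    · exact ⟨a, hadj.1, haS⟩
    · exact hadj.2.elim
  · rintro h (v | ⟨i, w⟩) hx
    · obtain ⟨i, hvi⟩ := hcover v
      obtain ⟨a, ha, haS⟩ | hcopy := h i
      · exact ⟨Sum.inl a, haS, hclique i ha hvi fun hav => hx (hav ▸ haS)⟩
      · exact ⟨Sum.inr (i, Classical.arbitrary W), hcopy _, hvi, trivial⟩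
    · obtain ⟨a, ha, haS⟩ | hcopy := h i
      · exact ⟨Sum.inl a, haS, ha, trivial⟩
      · exact absurd (hcopy w) hx

theorem dominates_sigmaGraph_join_top_bot_iff {ι : Type*} {α : ι → Type*} [Nonempty W]
    (T : Finset (Σ i, α i ⊕ W)) :
    Dominates (sigmaGraph fun i => graphJoin (⊤ : SimpleGraph (α i)) (⊥ : SimpleGraph W)) T ↔
      ∀ i, (∃ a, ⟨i, Sum.inl a⟩ ∈ T) ∨ ∀ w, ⟨i, Sum.inr w⟩ ∈ T := by
  constructor
  · intro hdom i
    refine or_iff_not_imp_right.2 fun hcopy => ?_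
    push Not at hcopy
    obtain ⟨w, hw⟩ := hcopy
    obtain ⟨u, huT, hadj⟩ := hdom _ hw
    obtain ⟨a | w', hjoin, rfl⟩ := sigmaGraph_adj_mk_iff.mp hadj.symm
    · exact ⟨a, huT⟩
    · cases hjoin
  · rintro h ⟨i, a | w⟩ hx
    · obtain ⟨a', ha'⟩ | hcopy := h i
      · exact ⟨_, ha', i, Sum.inl a', Sum.inl a, fun haa => hx (haa ▸ ha'), rfl, rfl⟩
      · exact ⟨_, hcopy (Classical.arbitrary W), i, Sum.inr _, Sum.inl a, trivial, rfl, rfl⟩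
    · obtain ⟨a', ha'⟩ | hcopy := h i
      · exact ⟨_, ha', i, Sum.inl a', Sum.inr w, trivial, rfl, rfl⟩
      · exact absurd (hcopy w) hx

section Enumeration

variable {ι : Type*} (C : ι → Finset V)

noncomputable def enumBlocks : (Σ i, Fin (C i).card) → V := fun x => (C x.1).equivFin.symm x.2

variable {C}

theorem enumBlocks_mem (i : ι) (a : Fin (C i).card) : enumBlocks C ⟨i, a⟩ ∈ C i :=
  ((C i).equivFin.symm a).2

theorem exists_enumBlocks_iff {p : V → Prop} {i : ι} :
    (∃ a, p (enumBlocks C ⟨i, a⟩)) ↔ ∃ v ∈ C i, p v := by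
  rw [(C i).equivFin.symm.exists_congr_left]
  simp [enumBlocks]

theorem bijective_enumBlocks (hC : ∀ v, ∃! i, v ∈ C i) : Bijective (enumBlocks C) := by
  refine ⟨?_, fun v => ?_⟩
  · rintro ⟨i, a⟩ ⟨j, b⟩ hab
    obtain rfl : i = j :=
      (hC _).unique (enumBlocks_mem i a) (hab ▸ enumBlocks_mem j b)
    obtain rfl : a = b := (C i).equivFin.symm.injective (Subtype.ext hab)
    rfl
  · obtain ⟨i, hi, -⟩ := hC v
    exact ⟨⟨i, (C i).equivFin ⟨v, hi⟩⟩, by simp [enumBlocks]⟩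

variable (W)

noncomputable def starsEquiv (hC : ∀ v, ∃! i, v ∈ C i) : (Σ i, Fin (C i).card ⊕ W) ≃ V ⊕ ι × W :=
  (Equiv.sigmaSumDistrib _ _).trans
    ((Equiv.ofBijective _ (bijective_enumBlocks hC)).sumCongr (Equiv.sigmaEquivProd ι W))

end Enumeration

/-- If `H` is the edgeless graph on `s ≥ 1` vertices, then `G^C ⋆ H`
and the disjoint union of the stars `S_{k_i,s}` have the same domination polynomial. -/
theorem domPoly_cliqueCoverProduct_empty {V : Type*} [Fintype V] (G : SimpleGraph V)
    {m : ℕ} (C : Fin m → Finset V) (hC : IsCliqueCover G C) (s : ℕ) (hs : 1 ≤ s) :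
    domPoly (cliqueCoverProduct G (⊥ : SimpleGraph (Fin s)) C Set.univ) =
      domPoly (sigmaGraph fun i : Fin m => kstar (C i).card s) := by
  have : Nonempty (Fin s) := ⟨⟨0, hs⟩⟩
  refine domPoly_eq_of_equiv (starsEquiv (Fin s) hC.2.1).symm fun S => ?_
  unfold kstar
  rw [dominates_cliqueCoverProduct_bot_iff (fun v => (hC.2.1 v).exists) hC.2.2,
    dominates_sigmaGraph_join_top_bot_iff]
  simp only [Finset.mem_map_equiv, Equiv.symm_symm]
  refine forall_congr' fun i => or_congr ?_ Iff.rfl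
  exact exists_enumBlocks_iff.symm
end
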